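/- The Sturm-Liouville form holds: d/dx [𝒫_ν'(·;n) u_{n-ν+1}] = -μ_{n,ν} 𝒫_ν(·;n) u_{n-ν} as an identity of linear functionals, where u satisfies (φ u)' = ψ u, u_k = φ^k u, and μ_{n,ν} = -ν((n-(ν+1)/2) φ'' + ψ'). -/

import Mathlib

/-!
Since `u` satisfies Pearson's equation with `(φ, ψ)`, the functional `u_m = φ^m u` satisfies it with
`(φ, ψ + m φ')`, and a Pearson pair turns `d/dx [R φ u_m]` into `(φ R' + (ψ + m φ') R) u_m`.
With `m = n - ν` and `R = 𝒫_ν'` this is the left-hand side of the hypergeometric-type equation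
`φ 𝒫_ν'' + (ψ + (n - ν) φ') 𝒫_ν' = λ 𝒫_ν`, `λ = -μ_{n,ν}`, which follows by induction on `ν`
from `𝒫_{ν+1}' = λ_{ν+1} 𝒫_ν`, using that `φ''` and `ψ'` are constants.
-/

open Polynomial

/-- Distributional derivative of a linear functional: `⟨u', p⟩ = -⟨u, p'⟩`. -/
noncomputable def fD (u : Polynomial ℝ →ₗ[ℝ] ℝ) : Polynomial ℝ →ₗ[ℝ] ℝ :=
  -(u ∘ₗ (derivative : Polynomial ℝ →ₗ[ℝ] Polynomial ℝ))

/-- Multiplication of a functional by a polynomial: `⟨Q u, p⟩ = ⟨u, Q p⟩`. -/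
noncomputable def pmul (Q : Polynomial ℝ) (u : Polynomial ℝ →ₗ[ℝ] ℝ) :
    Polynomial ℝ →ₗ[ℝ] ℝ :=
  u ∘ₗ (LinearMap.mulLeft ℝ Q)


/-- The complementary polynomials: `𝒫₀ = 1`,
`𝒫_{ν+1} = φ 𝒫_ν' + (ψ + (n-ν-1) φ') 𝒫_ν`. -/
noncomputable def compP (φ ψ : Polynomial ℝ) (n : ℕ) : ℕ → Polynomial ℝ
  | 0 => 1
  | ν + 1 => φ * derivative (compP φ ψ n ν)
      + (ψ + C ((n : ℝ) - ν - 1) * derivative φ) * compP φ ψ n ν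

section Functionals

variable (u : ℝ[X] →ₗ[ℝ] ℝ)

@[simp]
lemma pmul_apply (Q p : ℝ[X]) : pmul Q u p = u (Q * p) := rfl

@[simp]
lemma fD_apply (p : ℝ[X]) : fD u p = -u (derivative p) := rfl

lemma pmul_pmul (A B : ℝ[X]) : pmul A (pmul B u) = pmul (B * A) u := by
  ext p
  simp [mul_assoc]

lemma pmul_add (A B : ℝ[X]) : pmul (A + B) u = pmul A u + pmul B u := by
  ext p
  simp [add_mul]

lemma pmul_C_mul (c : ℝ) (Q : ℝ[X]) : pmul (C c * Q) u = c • pmul Q u := by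
  ext p
  simp [← smul_eq_C_mul]

lemma fD_pmul (Q : ℝ[X]) : fD (pmul Q u) = pmul (derivative Q) u + pmul Q (fD u) := by
  ext p
  simp [derivative_mul]

variable {u} {φ ψ : ℝ[X]}

lemma fD_pmul_pmul_of_pearson (hPearson : fD (pmul φ u) = pmul ψ u) (R : ℝ[X]) :
    fD (pmul R (pmul φ u)) = pmul (φ * derivative R + ψ * R) u := by
  rw [fD_pmul, hPearson, pmul_pmul, pmul_pmul, ← pmul_add]

lemma mul_derivative_pow (φ : ℝ[X]) (k : ℕ) :
    φ * derivative (φ ^ k) = C (k : ℝ) * derivative φ * φ ^ k := by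
  cases k with
  | zero => simp
  | succ k =>
    rw [derivative_pow_succ]
    push_cast
    ring

lemma pearson_pmul_pow (hPearson : fD (pmul φ u) = pmul ψ u) (k : ℕ) :
    fD (pmul φ (pmul (φ ^ k) u)) = pmul (ψ + C (k : ℝ) * derivative φ) (pmul (φ ^ k) u) := by
  rw [pmul_pmul, pmul_pmul, ← mul_comm φ, ← pmul_pmul, fD_pmul_pmul_of_pearson hPearson,
    mul_derivative_pow]
  congr 1
  ring

end Functionals

lemma eq_C_eval_zero_of_natDegree_le_zero {p : ℝ[X]} (hp : p.natDegree ≤ 0) :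
    p = C (p.eval 0) := by
  rw [← coeff_zero_eq_eval_zero]
  exact eq_C_of_natDegree_le_zero hp

section ComplementaryPolynomials

variable (φ ψ : ℝ[X]) (n : ℕ)

/-- `-μ_{n,ν}`, the eigenvalue of `𝒫_ν` in the hypergeometric-type equation. -/
noncomputable def compPEigenvalue (ν : ℕ) : ℝ :=
  ν * (((n : ℝ) - ((ν : ℝ) + 1) / 2) * (derivative (derivative φ)).eval 0
    + (derivative ψ).eval 0)

lemma compPEigenvalue_succ (ν : ℕ) :
    compPEigenvalue φ ψ n (ν + 1) = compPEigenvalue φ ψ n ν + (derivative ψ).eval 0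
      + ((n : ℝ) - ν - 1) * (derivative (derivative φ)).eval 0 := by
  simp only [compPEigenvalue]
  push_cast
  ring

variable {φ ψ}

lemma compP_hypergeometric_succ_of_derivative_eq (ν : ℕ) {c : ℝ}
    (hder : derivative (compP φ ψ n (ν + 1)) = C c * compP φ ψ n ν) :
    φ * derivative (derivative (compP φ ψ n (ν + 1)))
        + (ψ + C ((n : ℝ) - ↑(ν + 1)) * derivative φ) * derivative (compP φ ψ n (ν + 1))
      = C c * compP φ ψ n (ν + 1) := by
  rw [hder, derivative_mul, derivative_C, compP]
  simp only [map_sub, map_add, map_natCast, map_one, Nat.cast_add, Nat.cast_one]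
  ring

lemma compP_hypergeometric (hφ : φ.natDegree ≤ 2) (hψ : ψ.natDegree ≤ 1) (ν : ℕ) :
    φ * derivative (derivative (compP φ ψ n ν))
        + (ψ + C ((n : ℝ) - ν) * derivative φ) * derivative (compP φ ψ n ν)
      = C (compPEigenvalue φ ψ n ν) * compP φ ψ n ν := by
  have hφ'' : derivative (derivative φ) = C ((derivative (derivative φ)).eval 0) :=
    eq_C_eval_zero_of_natDegree_le_zero <|
      (natDegree_derivative_le _).trans <| by have := natDegree_derivative_le φ; omega
  have hψ' : derivative ψ = C ((derivative ψ).eval 0) :=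
    eq_C_eval_zero_of_natDegree_le_zero <| (natDegree_derivative_le ψ).trans <| by omega
  induction ν with
  | zero => simp [compP, compPEigenvalue]
  | succ ν ih =>
    apply compP_hypergeometric_succ_of_derivative_eq
    -- `𝒫_{ν+1}'` is the left-hand side of the equation for `𝒫_ν` plus `(ψ' + (n-ν-1) φ'') 𝒫_ν`.
    rw [compPEigenvalue_succ, compP, derivative_add, derivative_mul, derivative_mul,
      derivative_add, derivative_mul, derivative_C, hφ'', hψ']
    simp only [map_add, map_sub, map_natCast, map_one, map_mul, eval_C, zero_mul, zero_add] at ih ⊢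
    linear_combination ih

end ComplementaryPolynomials

/-- the Sturm–Liouville form
`d/dx [𝒫_ν'(·;n) u_{n-ν+1}] = -μ_{n,ν} 𝒫_ν(·;n) u_{n-ν}` as linear functionals,
with `μ_{n,ν} = -ν((n-(ν+1)/2) φ'' + ψ')` (constants `φ''`, `ψ'`). -/
theorem stmt_9 (φ ψ : Polynomial ℝ) (hφ : φ.natDegree ≤ 2) (hψ : ψ.degree = 1)
    (u : Polynomial ℝ →ₗ[ℝ] ℝ)
    (hPearson : fD (pmul φ u) = pmul ψ u)
    (n ν : ℕ) (hν : ν ≤ n) :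
    fD (pmul (derivative (compP φ ψ n ν)) (pmul (φ ^ (n - ν + 1)) u))
      = (-(-(ν : ℝ) * (((n : ℝ) - ((ν : ℝ) + 1) / 2) * (derivative (derivative φ)).eval 0
            + (derivative ψ).eval 0)))
          • pmul (compP φ ψ n ν) (pmul (φ ^ (n - ν)) u) := by
  have hψ1 : ψ.natDegree ≤ 1 := (natDegree_eq_of_degree_eq_some hψ).le
  have hode := compP_hypergeometric n hφ hψ1 ν
  rw [← Nat.cast_sub hν] at hode
  rw [pow_succ, ← pmul_pmul, fD_pmul_pmul_of_pearson (pearson_pmul_pow hPearson (n - ν)), hode,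
    pmul_C_mul, compPEigenvalue, neg_mul, neg_neg]
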